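/- Proximal inference update as KL projection onto a surrogate (Theorem 2): for η > 0 there exists a constant C, independent of Y, such that for every Y ∈ ℝⁿ, D_KL(N(Y,Σ) ‖ 𝕐*) + (1/η) D_KL(N(Y,Σ) ‖ N(Y_k,Σ)) = ((η+1)/η) D_KL(N(Y,Σ) ‖ 𝕐*_k) + C, where the surrogate target 𝕐*_k is the probability measure with density proportional to (exp(−S(y)) φ(y; 0, R⁻¹))^{η/(η+1)} · φ(y; Y_k, Σ)^{1/(η+1)}. Hence the proximal minimizer Y_{k+1} = argmin_Y [D_KL(N(Y,Σ) ‖ 𝕐*) + (1/η) D_KL(N(Y,Σ) ‖ N(Y_k,Σ))] coincides with argmin_Y D_KL(N(Y,Σ) ‖ 𝕐*_k). -/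

import Mathlib

open MeasureTheory Matrix Filter

noncomputable def gaussDensity {n : ℕ} (μ : Fin n → ℝ) (C : Matrix (Fin n) (Fin n) ℝ)
    (y : Fin n → ℝ) : ℝ :=
  (2 * Real.pi) ^ (-(n : ℝ) / 2) * C.det ^ (-(1 : ℝ) / 2) *
    Real.exp (-(1 / 2) * ((y - μ) ⬝ᵥ C⁻¹ *ᵥ (y - μ)))

noncomputable def gaussMeasure {n : ℕ} (μ : Fin n → ℝ) (C : Matrix (Fin n) (Fin n) ℝ) :
    Measure (Fin n → ℝ) :=
  volume.withDensity fun y => ENNReal.ofReal (gaussDensity μ C y)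

noncomputable def klDivD {n : ℕ} (p q : (Fin n → ℝ) → ℝ) : ℝ :=
  ∫ y, p y * Real.log (p y / q y)

/-!
Write `p = φ(·; Y, Σ)`, `f = exp (-S) φ(·; 0, R⁻¹)`, `g = φ(·; Y_k, Σ)` and `w = f ^ a g ^ b` with
`a = η/(η+1)`, `b = 1/(η+1)`. Since `a + b = 1`, `log (p / w) = a log (p / f) + b log (p / g)`, so
`KL(p ‖ w) = a KL(p ‖ f) + b KL(p ‖ g)`, and normalising `f` or `w` by a constant `Z` only adds
`log Z · ∫ p`. Multiplying by `(η+1)/η` gives the identity, with a constant that does not depend on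
`Y` because `∫ p` is translation invariant. All integrals are finite: the log-densities grow at most
quadratically, while `p ≤ A exp (-c ∑ yᵢ²)`.
-/

open Asymptotics Real

lemma integral_pos_of_forall_pos {α : Type*} [MeasurableSpace α] {μ : Measure α} [NeZero μ]
    {u : α → ℝ} (hu : ∀ x, 0 < u x) (hi : Integrable u μ) : 0 < ∫ x, u x ∂μ := by
  rw [integral_pos_iff_support_of_nonneg (fun x => (hu x).le) hi,
    show Function.support u = Set.univ from Set.eq_univ_of_forall fun x => (hu x).ne']
  exact Measure.measure_univ_pos.2 (NeZero.ne μ)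

lemma MeasureTheory.Integrable.rpow_mul_rpow {α : Type*} [MeasurableSpace α] {μ : Measure α}
    {f g : α → ℝ} {a b : ℝ} (hf : Integrable f μ) (hg : Integrable g μ) (hf0 : ∀ x, 0 ≤ f x)
    (hg0 : ∀ x, 0 ≤ g x) (ha : 0 ≤ a) (hb : 0 ≤ b) (hab : a + b = 1) :
    Integrable (fun x => f x ^ a * g x ^ b) μ :=
  ((hf.const_mul a).add (hg.const_mul b)).mono'
    (((continuous_rpow_const ha).comp_aestronglyMeasurable hf.1).mul
      ((continuous_rpow_const hb).comp_aestronglyMeasurable hg.1))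
    (ae_of_all _ fun x => by
      rw [Real.norm_of_nonneg (mul_nonneg (rpow_nonneg (hf0 x) a) (rpow_nonneg (hg0 x) b))]
      exact geom_mean_le_arith_mean2_weighted ha hb (hf0 x) (hg0 x) hab)

lemma exists_eq_mul_add_and_le_iff {α : Type*} {F G : α → ℝ} {k c : ℝ} (hk : 0 < k)
    (h : ∀ Y, F Y = k * G Y + c) :
    ∃ C, (∀ Y, F Y = k * G Y + C) ∧ ∀ Y₁ Y₂, F Y₁ ≤ F Y₂ ↔ G Y₁ ≤ G Y₂ :=
  ⟨c, h, fun Y₁ Y₂ => by rw [h, h, add_le_add_iff_right, mul_le_mul_iff_right₀ hk]⟩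

section HomogeneousOfDegreeTwo

variable {E : Type*} [NormedAddCommGroup E] [NormedSpace ℝ E] {q : E → ℝ}

lemma eq_norm_sq_mul_of_smul (hsmul : ∀ (t : ℝ) x, q (t • x) = t ^ 2 * q x) (x : E) :
    q x = ‖x‖ ^ 2 * q (‖x‖⁻¹ • x) := by
  rcases eq_or_ne x 0 with rfl | hx
  · simpa using hsmul 0 0
  · rw [hsmul, ← mul_assoc, ← mul_pow, mul_inv_cancel₀ (norm_ne_zero_iff.2 hx), one_pow, one_mul]

variable [ProperSpace E]

lemma exists_abs_le_mul_norm_sq (hq : Continuous q)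
    (hsmul : ∀ (t : ℝ) x, q (t • x) = t ^ 2 * q x) : ∃ C, ∀ x, |q x| ≤ C * ‖x‖ ^ 2 := by
  obtain ⟨C, hC⟩ := (isCompact_sphere (0 : E) 1).exists_bound_of_continuousOn hq.continuousOn
  refine ⟨C, fun x => ?_⟩
  rcases eq_or_ne x 0 with rfl | hx
  · simp [show q 0 = 0 by simpa using hsmul 0 0]
  rw [eq_norm_sq_mul_of_smul hsmul x, abs_mul, abs_of_nonneg (by positivity), mul_comm]
  exact mul_le_mul_of_nonneg_right (hC _ (by simp [norm_smul, hx])) (by positivity)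

lemma exists_pos_mul_norm_sq_le (hq : Continuous q)
    (hsmul : ∀ (t : ℝ) x, q (t • x) = t ^ 2 * q x) (hpos : ∀ x ≠ 0, 0 < q x) :
    ∃ c > 0, ∀ x, c * ‖x‖ ^ 2 ≤ q x := by
  have hq0 : q 0 = 0 := by simpa using hsmul 0 0
  have hunit : ∀ x : E, x ≠ 0 → ‖x‖⁻¹ • x ∈ Metric.sphere (0 : E) 1 := fun x hx => by
    simp [norm_smul, hx]
  rcases (Metric.sphere (0 : E) 1).eq_empty_or_nonempty with hE | hE
  · refine ⟨1, one_pos, fun x => ?_⟩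
    obtain rfl : x = 0 := by
      by_contra hx
      simpa [hE] using hunit x hx
    simp [hq0]
  obtain ⟨u, hu, hmin⟩ := (isCompact_sphere (0 : E) 1).exists_isMinOn hE hq.continuousOn
  refine ⟨q u, hpos u (by rintro rfl; simp at hu), fun x => ?_⟩
  rcases eq_or_ne x 0 with rfl | hx
  · simp [hq0]
  rw [eq_norm_sq_mul_of_smul hsmul x, mul_comm]
  exact mul_le_mul_of_nonneg_left (hmin (hunit x hx)) (by positivity)

end HomogeneousOfDegreeTwo

section QuadraticGrowth

variable {ι : Type*} [Fintype ι]

lemma Matrix.continuous_dotProduct_mulVec (M : Matrix ι ι ℝ) :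
    Continuous fun x : ι → ℝ => x ⬝ᵥ M *ᵥ x :=
  continuous_id.dotProduct (continuous_const.matrix_mulVec continuous_id)

lemma Matrix.smul_dotProduct_mulVec_smul (M : Matrix ι ι ℝ) (t : ℝ) (x : ι → ℝ) :
    (t • x) ⬝ᵥ M *ᵥ (t • x) = t ^ 2 * (x ⬝ᵥ M *ᵥ x) := by
  rw [mulVec_smul, smul_dotProduct, dotProduct_smul, smul_eq_mul, smul_eq_mul]
  ring

lemma Matrix.exists_abs_dotProduct_mulVec_le (M : Matrix ι ι ℝ) :
    ∃ C, ∀ x : ι → ℝ, |x ⬝ᵥ M *ᵥ x| ≤ C * ∑ i, x i ^ 2 := by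
  obtain ⟨C, hC⟩ := exists_abs_le_mul_norm_sq
    (q := fun x : EuclideanSpace ℝ ι => x.ofLp ⬝ᵥ M *ᵥ x.ofLp)
    (M.continuous_dotProduct_mulVec.comp (PiLp.continuous_ofLp 2 _))
    (fun t x => by simpa using M.smul_dotProduct_mulVec_smul t x.ofLp)
  exact ⟨C, fun x => by simpa [EuclideanSpace.real_norm_sq_eq] using hC (WithLp.toLp 2 x)⟩

lemma Matrix.PosDef.exists_pos_mul_sum_sq_le {M : Matrix ι ι ℝ} (hM : M.PosDef) :
    ∃ c > 0, ∀ x : ι → ℝ, c * ∑ i, x i ^ 2 ≤ x ⬝ᵥ M *ᵥ x := by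
  obtain ⟨c, hc, hC⟩ := exists_pos_mul_norm_sq_le
    (q := fun x : EuclideanSpace ℝ ι => x.ofLp ⬝ᵥ M *ᵥ x.ofLp)
    (M.continuous_dotProduct_mulVec.comp (PiLp.continuous_ofLp 2 _))
    (fun t x => by simpa using M.smul_dotProduct_mulVec_smul t x.ofLp)
    (fun x hx => hM.dotProduct_mulVec_pos (by simpa using hx))
  exact ⟨c, hc, fun x => by simpa [EuclideanSpace.real_norm_sq_eq] using hC (WithLp.toLp 2 x)⟩

lemma sum_sq_add_le (x z : ι → ℝ) :
    ∑ i, (x i + z i) ^ 2 ≤ 2 * ∑ i, x i ^ 2 + 2 * ∑ i, z i ^ 2 := by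
  rw [Finset.mul_sum, Finset.mul_sum, ← Finset.sum_add_distrib]
  exact Finset.sum_le_sum fun i _ => by nlinarith [sq_nonneg (x i - z i)]

lemma isBigO_one_add_sum_sq_of_abs_le {h : (ι → ℝ) → ℝ} {M : ℝ} (hM : ∀ y, |h y| ≤ M) :
    h =O[⊤] fun y => 1 + ∑ i, y i ^ 2 := by
  refine isBigO_top.2 ⟨M, fun y => ?_⟩
  have hs : 0 ≤ ∑ i, y i ^ 2 := by positivity
  rw [Real.norm_eq_abs, Real.norm_of_nonneg (by positivity)]
  nlinarith [hM y, (abs_nonneg _).trans (hM y)]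

lemma Matrix.isBigO_dotProduct_mulVec_sub (M : Matrix ι ι ℝ) (ν : ι → ℝ) :
    (fun y => (y - ν) ⬝ᵥ M *ᵥ (y - ν)) =O[⊤] fun y => 1 + ∑ i, y i ^ 2 := by
  obtain ⟨C, hC⟩ := M.exists_abs_dotProduct_mulVec_le
  refine isBigO_top.2 ⟨|C| * (2 + 2 * ∑ i, ν i ^ 2), fun y => ?_⟩
  have hshift : ∑ i, (y - ν) i ^ 2 ≤ 2 * ∑ i, y i ^ 2 + 2 * ∑ i, ν i ^ 2 := by
    simpa [sub_eq_add_neg] using sum_sq_add_le y (-ν)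
  have hy : 0 ≤ ∑ i, y i ^ 2 := by positivity
  have hν : 0 ≤ ∑ i, ν i ^ 2 := by positivity
  rw [Real.norm_eq_abs, Real.norm_of_nonneg (by positivity)]
  calc |(y - ν) ⬝ᵥ M *ᵥ (y - ν)| ≤ |C| * ∑ i, (y - ν) i ^ 2 :=
        (hC _).trans (mul_le_mul_of_nonneg_right (le_abs_self C) (by positivity))
    _ ≤ |C| * (2 * ∑ i, y i ^ 2 + 2 * ∑ i, ν i ^ 2) :=
        mul_le_mul_of_nonneg_left hshift (abs_nonneg C)
    _ ≤ |C| * (2 + 2 * ∑ i, ν i ^ 2) * (1 + ∑ i, y i ^ 2) := by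
        nlinarith [mul_nonneg (abs_nonneg C) (mul_nonneg hy hν), abs_nonneg C]

lemma integrable_exp_neg_mul_sum_sq {b : ℝ} (hb : 0 < b) :
    Integrable fun y : ι → ℝ => exp (-b * ∑ i, y i ^ 2) := by
  have hprod : (fun y : ι → ℝ => exp (-b * ∑ i, y i ^ 2)) = fun y => ∏ i, exp (-b * y i ^ 2) := by
    funext y
    rw [← Real.exp_sum, Finset.mul_sum]
  rw [hprod]
  exact Integrable.fintype_prod fun _ => integrable_exp_neg_mul_sq hb

lemma one_add_mul_exp_neg_mul_le {b t : ℝ} (hb : 0 < b) (ht : 0 ≤ t) :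
    (1 + t) * exp (-b * t) ≤ (1 + 2 / b) * exp (-(b / 2) * t) := by
  have hexp : exp (-b * t) ≤ exp (-(b / 2) * t) := exp_le_exp.2 (by nlinarith)
  have hlin : t ≤ 2 / b * exp (b / 2 * t) := by
    rw [div_mul_eq_mul_div, le_div_iff₀ hb]
    nlinarith [add_one_le_exp (b / 2 * t)]
  have htexp : t * exp (-b * t) ≤ 2 / b * exp (-(b / 2) * t) :=
    calc t * exp (-b * t) ≤ 2 / b * exp (b / 2 * t) * exp (-b * t) :=
          mul_le_mul_of_nonneg_right hlin (exp_pos _).le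
      _ = 2 / b * exp (-(b / 2) * t) := by
          rw [mul_assoc, ← exp_add]
          ring_nf
  nlinarith

lemma integrable_mul_of_abs_le_exp_neg_mul_sum_sq {g h : (ι → ℝ) → ℝ} {A b : ℝ} (hb : 0 < b)
    (hg : AEStronglyMeasurable g) (hgA : ∀ y, |g y| ≤ A * exp (-b * ∑ i, y i ^ 2))
    (hh : AEStronglyMeasurable h) (hhO : h =O[⊤] fun y => 1 + ∑ i, y i ^ 2) :
    Integrable fun y => g y * h y := by
  obtain ⟨K, hK⟩ := isBigO_top.1 hhO
  refine ((integrable_exp_neg_mul_sum_sq (half_pos hb)).const_mul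
    (|A| * |K| * (1 + 2 / b))).mono' (hg.mul hh) (ae_of_all _ fun y => ?_)
  have ht : 0 ≤ ∑ i, y i ^ 2 := by positivity
  have hgy : |g y| ≤ |A| * exp (-b * ∑ i, y i ^ 2) :=
    (hgA y).trans (mul_le_mul_of_nonneg_right (le_abs_self A) (exp_pos _).le)
  have hhy : ‖h y‖ ≤ |K| * (1 + ∑ i, y i ^ 2) := by
    have := hK y
    rw [Real.norm_eq_abs (1 + _), abs_of_pos (by linarith)] at this
    exact this.trans (mul_le_mul_of_nonneg_right (le_abs_self K) (by linarith))
  calc ‖g y * h y‖ = |g y| * ‖h y‖ := by rw [norm_mul, Real.norm_eq_abs]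
    _ ≤ (|A| * exp (-b * ∑ i, y i ^ 2)) * (|K| * (1 + ∑ i, y i ^ 2)) :=
        mul_le_mul hgy hhy (norm_nonneg _) (by positivity)
    _ = |A| * |K| * ((1 + ∑ i, y i ^ 2) * exp (-b * ∑ i, y i ^ 2)) := by ring
    _ ≤ |A| * |K| * ((1 + 2 / b) * exp (-(b / 2) * ∑ i, y i ^ 2)) :=
        mul_le_mul_of_nonneg_left (one_add_mul_exp_neg_mul_le hb ht) (by positivity)
    _ = _ := by ring

end QuadraticGrowth

section GaussDensity

variable {n : ℕ} {C : Matrix (Fin n) (Fin n) ℝ}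

lemma gaussDensity_pos (hC : 0 < C.det) (μ y : Fin n → ℝ) : 0 < gaussDensity μ C y := by
  unfold gaussDensity
  positivity

lemma continuous_gaussDensity (μ : Fin n → ℝ) (C : Matrix (Fin n) (Fin n) ℝ) :
    Continuous (gaussDensity μ C) :=
  continuous_const.mul (continuous_const.mul
    (C⁻¹.continuous_dotProduct_mulVec.comp (continuous_id.sub continuous_const))).rexp

lemma integral_gaussDensity (μ : Fin n → ℝ) (C : Matrix (Fin n) (Fin n) ℝ) :
    ∫ y, gaussDensity μ C y = ∫ y, gaussDensity 0 C y := by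
  have hshift : ∀ y, gaussDensity μ C y = gaussDensity 0 C (y - μ) := fun y => by
    simp [gaussDensity]
  simp_rw [hshift]
  exact integral_sub_right_eq_self _ μ

lemma log_gaussDensity (hC : 0 < C.det) (μ y : Fin n → ℝ) :
    log (gaussDensity μ C y) = log ((2 * π) ^ (-(n : ℝ) / 2) * C.det ^ (-(1 : ℝ) / 2))
      - 1 / 2 * ((y - μ) ⬝ᵥ C⁻¹ *ᵥ (y - μ)) := by
  rw [gaussDensity, log_mul (by positivity) (exp_pos _).ne', log_exp]
  ring

lemma isBigO_log_gaussDensity (hC : 0 < C.det) (μ : Fin n → ℝ) :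
    (fun y => log (gaussDensity μ C y)) =O[⊤] fun y => 1 + ∑ i, y i ^ 2 := by
  simp_rw [log_gaussDensity hC]
  exact (isBigO_one_add_sum_sq_of_abs_le fun _ => le_rfl).sub
    ((C⁻¹.isBigO_dotProduct_mulVec_sub μ).const_mul_left _)

lemma exists_gaussDensity_le (hC : C.PosDef) (μ : Fin n → ℝ) :
    ∃ A b, 0 < b ∧ ∀ y, gaussDensity μ C y ≤ A * exp (-b * ∑ i, y i ^ 2) := by
  obtain ⟨c, hc, hlow⟩ := hC.inv.exists_pos_mul_sum_sq_le
  refine ⟨(2 * π) ^ (-(n : ℝ) / 2) * C.det ^ (-(1 : ℝ) / 2) * exp (c / 2 * ∑ i, μ i ^ 2),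
    c / 4, by positivity, fun y => ?_⟩
  have hshift : ∑ i, y i ^ 2 ≤ 2 * ∑ i, (y - μ) i ^ 2 + 2 * ∑ i, μ i ^ 2 := by
    simpa using sum_sq_add_le (y - μ) μ
  rw [gaussDensity, mul_assoc _ (exp (c / 2 * ∑ i, μ i ^ 2)), ← exp_add]
  have hdet := hC.det_pos
  refine mul_le_mul_of_nonneg_left (exp_le_exp.2 ?_) (by positivity)
  nlinarith [hlow (y - μ)]

lemma integrable_gaussDensity_mul (hC : C.PosDef) (μ : Fin n → ℝ) {h : (Fin n → ℝ) → ℝ}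
    (hh : AEStronglyMeasurable h) (hhO : h =O[⊤] fun y => 1 + ∑ i, y i ^ 2) :
    Integrable fun y => gaussDensity μ C y * h y := by
  obtain ⟨A, b, hb, hA⟩ := exists_gaussDensity_le hC μ
  refine integrable_mul_of_abs_le_exp_neg_mul_sum_sq (A := A) hb
    (continuous_gaussDensity μ C).aestronglyMeasurable (fun y => ?_) hh hhO
  rw [abs_of_pos (gaussDensity_pos hC.det_pos μ y)]
  exact hA y

lemma integrable_gaussDensity (hC : C.PosDef) (μ : Fin n → ℝ) :
    Integrable (gaussDensity μ C) := by
  simpa using integrable_gaussDensity_mul hC μ (h := fun _ => 1) aestronglyMeasurable_const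
    (isBigO_one_add_sum_sq_of_abs_le (M := 1) fun _ => by simp)

lemma integrable_gaussDensity_mul_log_div (hC : C.PosDef) (μ : Fin n → ℝ)
    {q : (Fin n → ℝ) → ℝ} (hq : ∀ y, 0 < q y) (hq_meas : Measurable q)
    (hqO : (fun y => log (q y)) =O[⊤] fun y => 1 + ∑ i, y i ^ 2) :
    Integrable fun y => gaussDensity μ C y * log (gaussDensity μ C y / q y) := by
  have hp := gaussDensity_pos hC.det_pos μ
  refine integrable_gaussDensity_mul hC μ
    ((continuous_gaussDensity μ C).measurable.div hq_meas).log.aestronglyMeasurable ?_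
  simp_rw [log_div (hp _).ne' (hq _).ne']
  exact (isBigO_log_gaussDensity hC.det_pos μ).sub hqO

lemma integrable_exp_neg_mul_gaussDensity (hC : C.PosDef) (μ : Fin n → ℝ)
    {S : (Fin n → ℝ) → ℝ} {M : ℝ} (hS : Measurable S) (hM : ∀ y, |S y| ≤ M) :
    Integrable fun y => exp (-S y) * gaussDensity μ C y :=
  (integrable_gaussDensity_mul hC μ (h := fun y => exp (-S y)) hS.neg.exp.aestronglyMeasurable
    (isBigO_one_add_sum_sq_of_abs_le fun y => by
      rw [abs_of_pos (exp_pos _)]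
      exact exp_le_exp.2 ((neg_le_abs (S y)).trans (hM y)))).congr
    (ae_of_all _ fun y => mul_comm _ _)

lemma isBigO_log_exp_neg_mul_gaussDensity (hC : 0 < C.det) (μ : Fin n → ℝ)
    {S : (Fin n → ℝ) → ℝ} {M : ℝ} (hM : ∀ y, |S y| ≤ M) :
    (fun y => log (exp (-S y) * gaussDensity μ C y)) =O[⊤] fun y => 1 + ∑ i, y i ^ 2 := by
  simp_rw [log_mul (exp_pos _).ne' (gaussDensity_pos hC μ _).ne', log_exp]
  exact (isBigO_one_add_sum_sq_of_abs_le fun y => (abs_neg (S y)).le.trans (hM y)).add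
    (isBigO_log_gaussDensity hC μ)

end GaussDensity

section KullbackLeibler

variable {n : ℕ} {p q f g : (Fin n → ℝ) → ℝ}

lemma klDivD_div_const (hq : ∀ y, q y ≠ 0) {Z : ℝ} (hZ : Z ≠ 0) (hp : Integrable p)
    (hpq : Integrable fun y => p y * log (p y / q y)) :
    klDivD p (fun y => q y / Z) = klDivD p q + log Z * ∫ y, p y := by
  have hpt : ∀ y, p y * log (p y / (q y / Z)) = p y * log (p y / q y) + log Z * p y := by
    intro y
    rcases eq_or_ne (p y) 0 with h | h
    · simp [h]
    rw [div_div_eq_mul_div, mul_div_right_comm, log_mul (div_ne_zero h (hq y)) hZ]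
    ring
  simp only [klDivD, hpt]
  rw [integral_add hpq (hp.const_mul _), integral_const_mul]

lemma mul_log_div_rpow_mul_rpow {a b P F G : ℝ} (hab : a + b = 1) (hF : 0 < F) (hG : 0 < G) :
    P * log (P / (F ^ a * G ^ b)) = a * (P * log (P / F)) + b * (P * log (P / G)) := by
  rcases eq_or_ne P 0 with rfl | hP
  · simp
  rw [log_div hP (by positivity), log_mul (by positivity) (by positivity), log_rpow hF,
    log_rpow hG, log_div hP hF.ne', log_div hP hG.ne']
  linear_combination -(P * log P) * hab

lemma integrable_mul_log_div_rpow_mul_rpow {a b : ℝ} (hab : a + b = 1) (hf : ∀ y, 0 < f y)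
    (hg : ∀ y, 0 < g y) (hpf : Integrable fun y => p y * log (p y / f y))
    (hpg : Integrable fun y => p y * log (p y / g y)) :
    Integrable fun y => p y * log (p y / (f y ^ a * g y ^ b)) := by
  simp only [mul_log_div_rpow_mul_rpow hab (hf _) (hg _)]
  exact (hpf.const_mul a).add (hpg.const_mul b)

lemma klDivD_rpow_mul_rpow {a b : ℝ} (hab : a + b = 1) (hf : ∀ y, 0 < f y) (hg : ∀ y, 0 < g y)
    (hpf : Integrable fun y => p y * log (p y / f y))
    (hpg : Integrable fun y => p y * log (p y / g y)) :
    klDivD p (fun y => f y ^ a * g y ^ b) = a * klDivD p f + b * klDivD p g := by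
  simp only [klDivD, mul_log_div_rpow_mul_rpow hab (hf _) (hg _)]
  rw [integral_add (hpf.const_mul a) (hpg.const_mul b), integral_const_mul, integral_const_mul]

theorem klDivD_div_add_inv_mul_klDivD {η Z₁ Z₂ : ℝ} (hη : 0 < η) (hf : ∀ y, 0 < f y)
    (hg : ∀ y, 0 < g y) (hZ₁ : Z₁ ≠ 0) (hZ₂ : Z₂ ≠ 0) (hp : Integrable p)
    (hpf : Integrable fun y => p y * log (p y / f y))
    (hpg : Integrable fun y => p y * log (p y / g y)) :
    klDivD p (fun y => f y / Z₁) + 1 / η * klDivD p g =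
      (η + 1) / η * klDivD p (fun y => f y ^ (η / (η + 1)) * g y ^ (1 / (η + 1)) / Z₂)
        + (log Z₁ - (η + 1) / η * log Z₂) * ∫ y, p y := by
  have hab : η / (η + 1) + 1 / (η + 1) = 1 := by field_simp
  have hw : ∀ y, f y ^ (η / (η + 1)) * g y ^ (1 / (η + 1)) ≠ 0 := fun y => by
    have := hf y
    have := hg y
    positivity
  rw [klDivD_div_const (fun y => (hf y).ne') hZ₁ hp hpf,
    klDivD_div_const hw hZ₂ hp (integrable_mul_log_div_rpow_mul_rpow hab hf hg hpf hpg),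
    klDivD_rpow_mul_rpow hab hf hg hpf hpg]
  field_simp
  ring

end KullbackLeibler

theorem proximal_inference_update_general {n : ℕ}
    (R Cov : Matrix (Fin n) (Fin n) ℝ) (hR : R.PosDef) (hCov : Cov.PosDef)
    (S : (Fin n → ℝ) → ℝ) (hSmeas : Measurable S) (hSbdd : ∃ M, ∀ y, |S y| ≤ M)
    (Yk : Fin n → ℝ) (η : ℝ) (hη : 0 < η) :
    ∃ C : ℝ,
      (∀ Y : Fin n → ℝ,
        klDivD (gaussDensity Y Cov)
            (fun y => Real.exp (-S y) * gaussDensity 0 R⁻¹ y /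
              ∫ z, Real.exp (-S z) * gaussDensity 0 R⁻¹ z)
          + (1 / η) * klDivD (gaussDensity Y Cov) (gaussDensity Yk Cov) =
        ((η + 1) / η) * klDivD (gaussDensity Y Cov)
            (fun y => (Real.exp (-S y) * gaussDensity 0 R⁻¹ y) ^ (η / (η + 1)) *
                gaussDensity Yk Cov y ^ (1 / (η + 1)) /
              ∫ z, (Real.exp (-S z) * gaussDensity 0 R⁻¹ z) ^ (η / (η + 1)) *
                gaussDensity Yk Cov z ^ (1 / (η + 1)))
          + C) ∧
      (∀ Y₁ Y₂ : Fin n → ℝ,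
        (klDivD (gaussDensity Y₁ Cov)
            (fun y => Real.exp (-S y) * gaussDensity 0 R⁻¹ y /
              ∫ z, Real.exp (-S z) * gaussDensity 0 R⁻¹ z)
          + (1 / η) * klDivD (gaussDensity Y₁ Cov) (gaussDensity Yk Cov) ≤
         klDivD (gaussDensity Y₂ Cov)
            (fun y => Real.exp (-S y) * gaussDensity 0 R⁻¹ y /
              ∫ z, Real.exp (-S z) * gaussDensity 0 R⁻¹ z)
          + (1 / η) * klDivD (gaussDensity Y₂ Cov) (gaussDensity Yk Cov)) ↔
        (klDivD (gaussDensity Y₁ Cov)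
            (fun y => (Real.exp (-S y) * gaussDensity 0 R⁻¹ y) ^ (η / (η + 1)) *
                gaussDensity Yk Cov y ^ (1 / (η + 1)) /
              ∫ z, (Real.exp (-S z) * gaussDensity 0 R⁻¹ z) ^ (η / (η + 1)) *
                gaussDensity Yk Cov z ^ (1 / (η + 1))) ≤
         klDivD (gaussDensity Y₂ Cov)
            (fun y => (Real.exp (-S y) * gaussDensity 0 R⁻¹ y) ^ (η / (η + 1)) *
                gaussDensity Yk Cov y ^ (1 / (η + 1)) /
              ∫ z, (Real.exp (-S z) * gaussDensity 0 R⁻¹ z) ^ (η / (η + 1)) *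
                gaussDensity Yk Cov z ^ (1 / (η + 1))))) := by
  obtain ⟨M, hM⟩ := hSbdd
  set f : (Fin n → ℝ) → ℝ := fun y => Real.exp (-S y) * gaussDensity 0 R⁻¹ y
  have hf : ∀ y, 0 < f y := fun y => mul_pos (exp_pos _) (gaussDensity_pos hR.inv.det_pos 0 y)
  have hg : ∀ y, 0 < gaussDensity Yk Cov y := gaussDensity_pos hCov.det_pos Yk
  have hf_int : Integrable f := integrable_exp_neg_mul_gaussDensity hR.inv 0 hSmeas hM
  have hZ₁ := integral_pos_of_forall_pos hf hf_int
  have hZ₂ := integral_pos_of_forall_pos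
    (fun y => mul_pos (rpow_pos_of_pos (hf y) (η / (η + 1))) (rpow_pos_of_pos (hg y) (1 / (η + 1))))
    (hf_int.rpow_mul_rpow (integrable_gaussDensity hCov Yk) (fun y => (hf y).le)
      (fun y => (hg y).le) (by positivity) (by positivity) (by field_simp))
  refine exists_eq_mul_add_and_le_iff (k := (η + 1) / η) (by positivity)
    (c := (log (∫ y, f y) - (η + 1) / η * log (∫ y, f y ^ (η / (η + 1)) *
      gaussDensity Yk Cov y ^ (1 / (η + 1)))) * ∫ y, gaussDensity 0 Cov y) fun Y => ?_
  rw [klDivD_div_add_inv_mul_klDivD hη hf hg hZ₁.ne' hZ₂.ne' (integrable_gaussDensity hCov Y)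
    (integrable_gaussDensity_mul_log_div hCov Y hf
      (hSmeas.neg.exp.mul (continuous_gaussDensity 0 R⁻¹).measurable)
      (isBigO_log_exp_neg_mul_gaussDensity hR.inv.det_pos 0 hM))
    (integrable_gaussDensity_mul_log_div hCov Y hg (continuous_gaussDensity Yk Cov).measurable
      (isBigO_log_gaussDensity hCov.det_pos Yk)), integral_gaussDensity]

/-- Proximal inference update as KL projection onto a surrogate (Theorem 2): for `η > 0`
there is a constant `C`, independent of `Y`, with
`D_KL(N(Y,Σ)‖𝕐*) + (1/η) D_KL(N(Y,Σ)‖N(Y_k,Σ)) = ((η+1)/η) D_KL(N(Y,Σ)‖𝕐*_k) + C`,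
where `𝕐*_k ∝ (exp(−S) φ(·;0,R⁻¹))^{η/(η+1)} φ(·;Y_k,Σ)^{1/(η+1)}`; hence the proximal
minimizer coincides with the KL projection onto the surrogate. -/
theorem proximal_inference_update {n : ℕ} (hn : 1 ≤ n)
    (R Cov : Matrix (Fin n) (Fin n) ℝ) (hR : R.PosDef) (hCov : Cov.PosDef)
    (S : (Fin n → ℝ) → ℝ) (hSmeas : Measurable S) (hSbdd : ∃ M, ∀ y, |S y| ≤ M)
    (Yk : Fin n → ℝ) (η : ℝ) (hη : 0 < η) :
    ∃ C : ℝ,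
      (∀ Y : Fin n → ℝ,
        klDivD (gaussDensity Y Cov)
            (fun y => Real.exp (-S y) * gaussDensity 0 R⁻¹ y /
              ∫ z, Real.exp (-S z) * gaussDensity 0 R⁻¹ z)
          + (1 / η) * klDivD (gaussDensity Y Cov) (gaussDensity Yk Cov) =
        ((η + 1) / η) * klDivD (gaussDensity Y Cov)
            (fun y => (Real.exp (-S y) * gaussDensity 0 R⁻¹ y) ^ (η / (η + 1)) *
                gaussDensity Yk Cov y ^ (1 / (η + 1)) /
              ∫ z, (Real.exp (-S z) * gaussDensity 0 R⁻¹ z) ^ (η / (η + 1)) *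
                gaussDensity Yk Cov z ^ (1 / (η + 1)))
          + C) ∧
      (∀ Y₁ Y₂ : Fin n → ℝ,
        (klDivD (gaussDensity Y₁ Cov)
            (fun y => Real.exp (-S y) * gaussDensity 0 R⁻¹ y /
              ∫ z, Real.exp (-S z) * gaussDensity 0 R⁻¹ z)
          + (1 / η) * klDivD (gaussDensity Y₁ Cov) (gaussDensity Yk Cov) ≤
         klDivD (gaussDensity Y₂ Cov)
            (fun y => Real.exp (-S y) * gaussDensity 0 R⁻¹ y /
              ∫ z, Real.exp (-S z) * gaussDensity 0 R⁻¹ z)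
          + (1 / η) * klDivD (gaussDensity Y₂ Cov) (gaussDensity Yk Cov)) ↔
        (klDivD (gaussDensity Y₁ Cov)
            (fun y => (Real.exp (-S y) * gaussDensity 0 R⁻¹ y) ^ (η / (η + 1)) *
                gaussDensity Yk Cov y ^ (1 / (η + 1)) /
              ∫ z, (Real.exp (-S z) * gaussDensity 0 R⁻¹ z) ^ (η / (η + 1)) *
                gaussDensity Yk Cov z ^ (1 / (η + 1))) ≤
         klDivD (gaussDensity Y₂ Cov)
            (fun y => (Real.exp (-S y) * gaussDensity 0 R⁻¹ y) ^ (η / (η + 1)) *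
                gaussDensity Yk Cov y ^ (1 / (η + 1)) /
              ∫ z, (Real.exp (-S z) * gaussDensity 0 R⁻¹ z) ^ (η / (η + 1)) *
                gaussDensity Yk Cov z ^ (1 / (η + 1))))) :=
  proximal_inference_update_general R Cov hR hCov S hSmeas hSbdd Yk η hη
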